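/- ER-WL is exactly as powerful as WL: augmenting a graph with an explicit edge-representation node for every edge (connected to the edge's two endpoints, carrying a fresh label α) neither increases nor decreases the ability of the WL test to distinguish non-isomorphic graphs. -/

import Mathlib

/-- The type of Weisfeiler-Leman colors after `t` iterations, starting from features in `F`.
The injective hash function is modeled by pairing: a color at iteration `t+1` is the pair of
the previous color and the multiset of the previous colors of the neighbors. -/
def WLColor (F : Type*) : ℕ → Type _
  | 0 => F
  | t + 1 => WLColor F t × Multiset (WLColor F t)

/-- The WL coloring of a graph `G` with node features `X` at iteration `t`:
`c_v^(0) = hash X_v` and `c_v^(t) = hash (c_v^(t-1), {{c_w^(t-1) | w ∈ N(v)}})`,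
with the injective hash realized by pairing. -/
def wl {V F : Type*} [Fintype V] (G : SimpleGraph V) [DecidableRel G.Adj] (X : V → F) :
    (t : ℕ) → V → WLColor F t
  | 0 => X
  | t + 1 => fun v => (wl G X t v, (G.neighborFinset v).val.map (wl G X t))


/-- A simple graph built from a boolean relation (symmetrized, loops removed). -/
def boolGraph {α : Type*} (r : α → α → Bool) : SimpleGraph α :=
  SimpleGraph.fromRel fun a b => r a b = true

instance {α : Type*} [DecidableEq α] (r : α → α → Bool) : DecidableRel (boolGraph r).Adj :=
  fun a b => decidable_of_iff _ (SimpleGraph.fromRel_adj _ a b).symm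

variable {V F : Type*}

/-- The relation underlying the edge-representation augmentation `ER(G)`: original adjacency
between original vertices, and each edge-node is adjacent to its two endpoints. -/
def erRel [DecidableEq V] (G : SimpleGraph V) [DecidableRel G.Adj] :
    (V ⊕ G.edgeSet) → (V ⊕ G.edgeSet) → Bool
  | Sum.inl u, Sum.inl v => decide (G.Adj u v)
  | Sum.inl v, Sum.inr e => decide (v ∈ (e : Sym2 V))
  | Sum.inr e, Sum.inl v => decide (v ∈ (e : Sym2 V))
  | Sum.inr _, Sum.inr _ => false

/-- The edge-representation augmented graph `ER(G)`, with one new node per edge, connected to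
the edge's two endpoints. -/
def ERGraph [DecidableEq V] (G : SimpleGraph V) [DecidableRel G.Adj] :
    SimpleGraph (V ⊕ G.edgeSet) :=
  boolGraph (erRel G)

instance [DecidableEq V] (G : SimpleGraph V) [DecidableRel G.Adj] :
    DecidableRel (ERGraph G).Adj :=
  inferInstanceAs (DecidableRel (boolGraph (erRel G)).Adj)

/-- The features of `ER(G)`: original features on original vertices, a fresh label `α = none`
on the edge nodes. -/
def erX [DecidableEq V] (G : SimpleGraph V) [DecidableRel G.Adj] (X : V → F) :
    (V ⊕ G.edgeSet) → Option F :=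
  Sum.elim (fun v => some (X v)) (fun _ => none)

/-!
By simultaneous induction on `t`, the ER-WL colour of an original vertex is `erVertexColor t`
of its WL colour, and that of the edge node of `{u, w}` is `erEdgeColor t` of the unordered pair
of WL colours of `u` and `w`. So the ER-WL colour multiset at round `t` is determined by the WL
colour multiset at round `t` together with the multiset of edge colour pairs, and the latter is
determined by the WL colours at round `t + 1`, which list each edge twice, once from each end.
Conversely, original vertices are recognised by their initial label `some _`, and
`erVertexColor t` is injective, so the ER-WL multiset determines the WL multiset.
-/

lemma Sym2.toMultiset_map {α β : Type*} (f : α → β) (e : Sym2 α) :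
    (e.map f).toMultiset = e.toMultiset.map f := by
  induction e using Sym2.ind with
  | _ a b => rfl

lemma Finset.sum_singleton_eq_map_val {α β : Type*} (s : Finset α) (f : α → β) :
    ∑ a ∈ s, ({f a} : Multiset β) = s.val.map f := by
  rw [← Multiset.sum_map_singleton (s.val.map f), Multiset.map_map]
  rfl

namespace SimpleGraph

variable [Fintype V] (G : SimpleGraph V) [DecidableRel G.Adj]

lemma sum_neighborFinset_eq_sum_dart {M : Type*} [AddCommMonoid M] (f : V → V → M) :
    ∑ v, ∑ w ∈ G.neighborFinset v, f v w = ∑ d : G.Dart, f d.fst d.snd := by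
  rw [Finset.sum_sigma']
  refine Finset.sum_bij'
    (fun p hp => ⟨(p.1, p.2), (G.mem_neighborFinset _ _).1 (Finset.mem_sigma.1 hp).2⟩)
    (fun d _ => ⟨d.fst, d.snd⟩) (fun _ _ => Finset.mem_univ _)
    (fun d _ => Finset.mem_sigma.2 ⟨Finset.mem_univ _, (G.mem_neighborFinset _ _).2 d.adj⟩)
    (fun _ _ => rfl) (fun _ _ => rfl) (fun _ _ => rfl)

lemma sum_dart_edge {M : Type*} [AddCommMonoid M] (f : Sym2 V → M) :
    ∑ d : G.Dart, f d.edge = 2 • ∑ e ∈ G.edgeFinset, f e := by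
  classical
  rw [← Finset.sum_fiberwise_of_maps_to (g := Dart.edge) (t := G.edgeFinset)
    fun d _ => G.mem_edgeFinset.2 d.edge_mem, Finset.smul_sum]
  refine Finset.sum_congr rfl fun e he => ?_
  rw [Finset.sum_congr rfl fun d hd => congrArg f (Finset.mem_filter.1 hd).2, Finset.sum_const,
    G.dart_edge_fiber_card e (G.mem_edgeFinset.1 he)]

lemma bind_neighborFinset_sym2Mk :
    (Finset.univ.val.bind fun v => (G.neighborFinset v).val.map fun w => s(v, w)) =
      2 • G.edgeFinset.val := by
  calc (Finset.univ.val.bind fun v => (G.neighborFinset v).val.map fun w => s(v, w))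
      = ∑ v, ∑ w ∈ G.neighborFinset v, ({s(v, w)} : Multiset (Sym2 V)) := by
        simp only [Finset.sum_singleton_eq_map_val]
        rfl
    _ = ∑ d : G.Dart, {d.edge} := G.sum_neighborFinset_eq_sum_dart _
    _ = 2 • G.edgeFinset.val := by rw [sum_dart_edge, Finset.sum_multiset_singleton]

end SimpleGraph

namespace ERGraph

variable [DecidableEq V] (G : SimpleGraph V) [DecidableRel G.Adj]

@[simp]
lemma adj_inl_inl {u v : V} : (ERGraph G).Adj (.inl u) (.inl v) ↔ G.Adj u v := by
  simp only [ERGraph, boolGraph, SimpleGraph.fromRel_adj, erRel, decide_eq_true_eq, ne_eq,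
    Sum.inl.injEq, G.adj_comm v u, or_self, and_iff_right_iff_imp]
  exact G.ne_of_adj

@[simp]
lemma adj_inl_inr {v : V} {e : G.edgeSet} :
    (ERGraph G).Adj (.inl v) (.inr e) ↔ v ∈ (e : Sym2 V) := by
  simp [ERGraph, boolGraph, erRel]

@[simp]
lemma adj_inr_inl {v : V} {e : G.edgeSet} :
    (ERGraph G).Adj (.inr e) (.inl v) ↔ v ∈ (e : Sym2 V) := by
  rw [SimpleGraph.adj_comm, adj_inl_inr]

@[simp]
lemma not_adj_inr_inr {e f : G.edgeSet} : ¬ (ERGraph G).Adj (.inr e) (.inr f) := by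
  simp [ERGraph, boolGraph, erRel]

variable [Fintype V]

lemma neighborFinset_inr_val (e : G.edgeSet) :
    ((ERGraph G).neighborFinset (.inr e)).val = (e : Sym2 V).toMultiset.map .inl := by
  obtain ⟨e, he⟩ := e
  induction e using Sym2.ind with
  | _ u w =>
    have huw : u ≠ w := G.ne_of_adj he
    refine (Multiset.Nodup.ext (Finset.nodup _) ?_).2 ?_
    · simp [Sym2.toMultiset, huw]
    · rintro (x | f) <;> simp

lemma map_neighborFinset_inl_val {β : Type*} (φ : V ⊕ G.edgeSet → β) (ψ : V → β) (v : V)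
    (hψ : ∀ w (h : G.Adj v w), ψ w = φ (.inr ⟨s(v, w), h⟩)) :
    ((ERGraph G).neighborFinset (.inl v)).val.map φ =
      (G.neighborFinset v).val.map (φ ∘ .inl) + (G.neighborFinset v).val.map ψ := by
  have hsplit : ((ERGraph G).neighborFinset (.inl v)).val =
      (G.neighborFinset v).val.map .inl + (G.neighborFinset v).attach.val.map
        fun w => .inr ⟨s(v, w.1), (G.mem_neighborFinset v w.1).1 w.2⟩ := by
    refine (Multiset.Nodup.ext (Finset.nodup _) ?_).2 ?_
    · refine Multiset.nodup_add.2 ⟨(Finset.nodup _).map Sum.inl_injective,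
        (Finset.nodup _).map fun w w' h => ?_, ?_⟩
      · exact Subtype.ext (Sym2.congr_right.1 (Subtype.ext_iff.1 (Sum.inr_injective h)))
      · simp only [Multiset.disjoint_map_map]
        exact fun _ _ _ _ => Sum.inl_ne_inr
    · rintro (x | ⟨e, he⟩)
      · simp
      · rw [Finset.mem_val, SimpleGraph.mem_neighborFinset, adj_inl_inr]
        constructor
        · intro hv
          obtain ⟨w, rfl⟩ := Sym2.mem_iff_exists.1 hv
          exact Multiset.mem_add.2 <| .inr <| Multiset.mem_map.2
            ⟨⟨w, (G.mem_neighborFinset v w).2 he⟩, Multiset.mem_attach _ _, rfl⟩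
        · simp only [Multiset.mem_add, Multiset.mem_map, reduceCtorEq, and_false, exists_false,
            false_or]
          rintro ⟨w, -, hw⟩
          cases hw
          exact Sym2.mem_mk_left v w
  rw [hsplit, Multiset.map_add, Multiset.map_map, Multiset.map_map]
  congr 1
  rw [← Multiset.attach_map_val' _ ψ]
  exact Multiset.map_congr rfl fun w _ => (hψ w _).symm

end ERGraph

namespace WLColor

def initial : (t : ℕ) → WLColor F t → F
  | 0, x => x
  | t + 1, x => initial t x.1

def incidentPairs (t : ℕ) (x : WLColor F (t + 1)) : Multiset (Sym2 (WLColor F t)) :=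
  x.2.map fun y => s(x.1, y)

end WLColor

mutual

def erVertexColor : (t : ℕ) → WLColor F t → WLColor (Option F) t
  | 0, x => some x
  | t + 1, x => (erVertexColor t x.1,
      x.2.map (erVertexColor t) + (x.incidentPairs t).map (erEdgeColor t))

def erEdgeColor : (t : ℕ) → Sym2 (WLColor F t) → WLColor (Option F) t
  | 0, _ => none
  | t + 1, e =>
    (erEdgeColor t (e.map Prod.fst), (e.map Prod.fst).toMultiset.map (erVertexColor t))

end

lemma initial_erVertexColor (t : ℕ) (x : WLColor F t) :
    (erVertexColor t x).initial t = some (x.initial t) := by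
  induction t with
  | zero => rfl
  | succ t ih => exact ih x.1

lemma initial_erEdgeColor (t : ℕ) (e : Sym2 (WLColor F t)) :
    (erEdgeColor t e).initial t = none := by
  induction t with
  | zero => rfl
  | succ t ih => exact ih _

lemma filter_isSome_initial (t : ℕ) (m : Multiset (WLColor F t))
    (m' : Multiset (Sym2 (WLColor F t))) :
    (m.map (erVertexColor t) + m'.map (erEdgeColor t)).filter (fun c => (c.initial t).isSome) =
      m.map (erVertexColor t) := by
  rw [Multiset.filter_add, Multiset.filter_eq_self.2, Multiset.filter_eq_nil.2, add_zero]
  · simp [initial_erEdgeColor]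
  · simp [initial_erVertexColor]

lemma erVertexColor_injective (t : ℕ) : Function.Injective (erVertexColor (F := F) t) := by
  induction t with
  | zero => exact Option.some_injective F
  | succ t ih =>
    intro x y h
    obtain ⟨hxy, hm⟩ := Prod.mk.inj h
    have hm := congrArg (Multiset.filter fun c => (c.initial t).isSome) hm
    rw [filter_isSome_initial, filter_isSome_initial] at hm
    exact Prod.ext (ih hxy) (Multiset.map_injective ih hm)

section Colors

variable [Fintype V] [DecidableEq V] (G : SimpleGraph V) [DecidableRel G.Adj] (X : V → F)

mutual

lemma wl_ERGraph_inl : ∀ (t : ℕ) (v : V),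
    wl (ERGraph G) (erX G X) t (.inl v) = erVertexColor t (wl G X t v)
  | 0, _ => rfl
  | t + 1, v => by
    refine Prod.ext (wl_ERGraph_inl t v) ?_
    change ((ERGraph G).neighborFinset (.inl v)).val.map (wl (ERGraph G) (erX G X) t) =
      ((G.neighborFinset v).val.map (wl G X t)).map (erVertexColor t) +
        (((G.neighborFinset v).val.map (wl G X t)).map (s(wl G X t v, ·))).map (erEdgeColor t)
    rw [ERGraph.map_neighborFinset_inl_val G _
      (fun w => erEdgeColor t s(wl G X t v, wl G X t w)) v
      fun w h => by rw [wl_ERGraph_inr t]; rfl]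
    simp only [Multiset.map_map, Function.comp_def, wl_ERGraph_inl t]

lemma wl_ERGraph_inr : ∀ (t : ℕ) (e : G.edgeSet),
    wl (ERGraph G) (erX G X) t (.inr e) = erEdgeColor t ((e : Sym2 V).map (wl G X t))
  | 0, _ => rfl
  | t + 1, e => by
    have hfst : ((e : Sym2 V).map (wl G X (t + 1))).map Prod.fst =
        (e : Sym2 V).map (wl G X t) :=
      Sym2.map_map ..
    refine Prod.ext ?_ ?_
    · exact (wl_ERGraph_inr t e).trans (congrArg (erEdgeColor t) hfst.symm)
    · change ((ERGraph G).neighborFinset (.inr e)).val.map (wl (ERGraph G) (erX G X) t) =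
        (((e : Sym2 V).map (wl G X (t + 1))).map Prod.fst).toMultiset.map (erVertexColor t)
      rw [hfst, ERGraph.neighborFinset_inr_val, Sym2.toMultiset_map]
      simp only [Multiset.map_map, Function.comp_def, wl_ERGraph_inl t]

end

end Colors

section EdgeColors

variable [Fintype V] (G : SimpleGraph V) [DecidableRel G.Adj] (X : V → F)

def wlEdgeColors (t : ℕ) : Multiset (Sym2 (WLColor F t)) :=
  G.edgeFinset.val.map (Sym2.map (wl G X t))

lemma two_nsmul_wlEdgeColors (t : ℕ) :
    2 • wlEdgeColors G X t =
      (Finset.univ.val.map (wl G X (t + 1))).bind (WLColor.incidentPairs t) := by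
  rw [wlEdgeColors, ← Multiset.map_nsmul, ← G.bind_neighborFinset_sym2Mk, Multiset.map_bind,
    Multiset.bind_map]
  refine congrArg _ (funext fun v => ?_)
  change _ = ((G.neighborFinset v).val.map (wl G X t)).map (s(wl G X t v, ·))
  rw [Multiset.map_map, Multiset.map_map]
  rfl

variable [DecidableEq V]

lemma map_wl_ERGraph (t : ℕ) :
    Finset.univ.val.map (wl (ERGraph G) (erX G X) t) =
      (Finset.univ.val.map (wl G X t)).map (erVertexColor t) +
        (wlEdgeColors G X t).map (erEdgeColor t) := by
  have huniv : (Finset.univ : Finset (V ⊕ G.edgeSet)).val =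
      Finset.univ.val.map .inl + Finset.univ.val.map .inr := by
    rw [← Finset.univ_disjSum_univ, Finset.val_disjSum]
    rfl
  have hedges : G.edgeFinset.val = (Finset.univ : Finset G.edgeSet).val.map Subtype.val := rfl
  rw [huniv, wlEdgeColors, hedges]
  simp only [Multiset.map_add, Multiset.map_map, Function.comp_def, wl_ERGraph_inl, wl_ERGraph_inr]

end EdgeColors

/-- ER-WL is exactly as powerful as WL: for any two graphs, the WL test distinguishes them
(the multisets of colors differ at some iteration) if and only if WL run on the
edge-representation augmented graphs distinguishes them. -/
theorem erwl_as_powerful_as_wl {V₁ V₂ : Type*} [Fintype V₁] [DecidableEq V₁]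
    [Fintype V₂] [DecidableEq V₂]
    (G₁ : SimpleGraph V₁) [DecidableRel G₁.Adj] (X₁ : V₁ → F)
    (G₂ : SimpleGraph V₂) [DecidableRel G₂.Adj] (X₂ : V₂ → F) :
    (∃ t : ℕ, (Finset.univ.val.map (wl G₁ X₁ t)) ≠ (Finset.univ.val.map (wl G₂ X₂ t))) ↔
    (∃ t : ℕ, (Finset.univ.val.map (wl (ERGraph G₁) (erX G₁ X₁) t)) ≠
        (Finset.univ.val.map (wl (ERGraph G₂) (erX G₂ X₂) t))) := by
  rw [← not_iff_not]
  simp only [not_exists, not_not]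
  constructor
  · intro hwl t
    have hedges : wlEdgeColors G₁ X₁ t = wlEdgeColors G₂ X₂ t :=
      nsmul_right_injective two_ne_zero <| by
        simp only [two_nsmul_wlEdgeColors, hwl (t + 1)]
    rw [map_wl_ERGraph, map_wl_ERGraph, hwl t, hedges]
  · intro herwl t
    refine Multiset.map_injective (erVertexColor_injective t) ?_
    simpa only [map_wl_ERGraph, filter_isSome_initial] using
      congrArg (Multiset.filter fun c => (c.initial t).isSome) (herwl t)
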